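/- arXiv:2505.07992 — 3 statements merged into one kernel-verified Lean document; each statement's English description precedes it below -/
import Mathlib

section
/- Let G be a connected bipartite graph and xy an edge of G. Let F_xy be the set of edges of G that are in relation Θ to xy, where two edges x₁x₂ and y₁y₂ are in relation Θ if d(x₁,y₁) + d(x₂,y₂) ≠ d(x₁,y₂) + d(x₂,y₁). Then the spanning subgraph G − F_xy has exactly two connected components, namely the subgraphs induced by W_xy and by W_yx. -/
/-!
In a bipartite graph the distances from any vertex to the two ends of an edge differ by exactly
one, so `w ↦ d(w,y) - d(w,x)` takes only the values `1` (on `W_xy`) and `-1` (on `W_yx`).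
An edge `ab` is in relation `Θ` with `xy` exactly when this function differs at `a` and `b`, so
`G - F_xy` has no edge between `W_xy` and `W_yx`. Conversely a geodesic from a vertex of `W_xy`
to `x` stays inside `W_xy` and hence avoids `F_xy`.
-/

namespace SimpleGraph

variable {V : Type*} {G : SimpleGraph V}

lemma Colorable.dist_ne_of_adj (hbip : G.Colorable 2) (u : V) {v w : V} (hadj : G.Adj v w)
    (hreach : G.Reachable u v) : G.dist u v ≠ G.dist u w := by
  obtain ⟨p, hp⟩ := hreach.exists_walk_length_eq_dist
  obtain ⟨q, hq⟩ := (hreach.trans hadj.reachable).exists_walk_length_eq_dist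
  have heven := two_colorable_iff_forall_loop_even.mp hbip u ((p.concat hadj).append q.reverse)
  rw [Walk.length_append, Walk.length_concat, Walk.length_reverse, hp, hq] at heven
  intro h
  rw [h, add_right_comm, ← two_mul] at heven
  exact Nat.not_even_two_mul_add_one _ heven

lemma Colorable.dist_eq_dist_add_one_of_adj (hbip : G.Colorable 2) (hconn : G.Connected)
    (u : V) {v w : V} (hadj : G.Adj v w) :
    G.dist u v = G.dist u w + 1 ∨ G.dist u w = G.dist u v + 1 := by
  grind [hbip.dist_ne_of_adj u hadj (hconn u v), Adj.diff_dist_adj]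

lemma Reachable.exists_adj_dist_add_one_eq {u v : V} (h : G.Reachable u v) (hne : u ≠ v) :
    ∃ w, G.Adj u w ∧ G.dist w v + 1 = G.dist u v := by
  obtain ⟨p, hp⟩ := h.exists_walk_length_eq_dist
  cases p with
  | nil => exact absurd rfl hne
  | cons hadj q =>
    refine ⟨_, hadj, le_antisymm ?_ ?_⟩
    · rw [← hp, Walk.length_cons]
      exact Nat.add_le_add_right (dist_le q) 1
    · have := hadj.symm.diff_dist_adj (u := v)
      rw [dist_comm (u := v), dist_comm (u := v)] at this
      omega

def crossingEdges {α : Type*} (G : SimpleGraph V) (f : V → α) : Set (Sym2 V) :=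
  {e | ∃ a b, e = s(a, b) ∧ G.Adj a b ∧ f a ≠ f b}

lemma crossingEdges_comp_of_injective {α β : Type*} (f : V → α) {g : α → β}
    (hg : g.Injective) : G.crossingEdges (g ∘ f) = G.crossingEdges f := by
  simp only [crossingEdges, Function.comp_apply, hg.ne_iff]

lemma deleteEdges_crossingEdges_adj {α : Type*} (f : V → α) {a b : V} :
    (G.deleteEdges (G.crossingEdges f)).Adj a b ↔ G.Adj a b ∧ f a = f b := by
  rw [deleteEdges_adj, and_congr_right_iff]
  intro hab
  simp only [crossingEdges, Set.mem_ofPred_eq, Sym2.eq_iff, not_exists, not_and, not_not]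
  constructor
  · exact fun h ↦ h a b (.inl ⟨rfl, rfl⟩) hab
  · rintro h a' b' (⟨rfl, rfl⟩ | ⟨rfl, rfl⟩) - <;> simp [h]

lemma Reachable.eq_of_deleteEdges_crossingEdges {α : Type*} {f : V → α} {u v : V}
    (h : (G.deleteEdges (G.crossingEdges f)).Reachable u v) : f u = f v := by
  obtain ⟨p⟩ := h
  induction p with
  | nil => rfl
  | cons hadj _ ih => exact ((deleteEdges_crossingEdges_adj f).mp hadj).2.trans ih

/-- Positive exactly on `W_xy` and negative exactly on `W_yx`. -/
noncomputable def distDiff (G : SimpleGraph V) (x y w : V) : ℤ := G.dist w y - G.dist w x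

lemma distDiff_swap (x y w : V) : G.distDiff y x w = -G.distDiff x y w := by
  simp only [distDiff, neg_sub]

lemma crossingEdges_distDiff_swap (x y : V) :
    G.crossingEdges (G.distDiff y x) = G.crossingEdges (G.distDiff x y) := by
  rw [funext (distDiff_swap x y), ← Function.comp_def Neg.neg,
    crossingEdges_comp_of_injective _ neg_injective]

lemma dist_add_dist_ne_iff_distDiff_ne (x y a b : V) :
    G.dist a x + G.dist b y ≠ G.dist a y + G.dist b x ↔ G.distDiff x y a ≠ G.distDiff x y b := by
  simp only [distDiff, ne_eq]
  omega

lemma Colorable.distDiff_eq_one_or_eq_neg_one (hbip : G.Colorable 2) (hconn : G.Connected)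
    {x y : V} (hxy : G.Adj x y) (w : V) :
    G.distDiff x y w = 1 ∨ G.distDiff x y w = -1 := by
  have := hbip.dist_eq_dist_add_one_of_adj hconn w hxy
  simp only [distDiff]
  omega

lemma Colorable.reachable_deleteEdges_of_distDiff_eq_one (hbip : G.Colorable 2)
    (hconn : G.Connected) {x y : V} (hxy : G.Adj x y) {u : V} (hu : G.distDiff x y u = 1) :
    (G.deleteEdges (G.crossingEdges (G.distDiff x y))).Reachable u x := by
  induction hn : G.dist u x using Nat.strong_induction_on generalizing u with
  | _ n ih =>
    by_cases hux : u = x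
    · exact hux ▸ Reachable.refl _
    obtain ⟨w, huw, hw⟩ := (hconn u x).exists_adj_dist_add_one_eq hux
    -- `w` is one step closer to `x`, and at most one step closer to `y`, so it is still in `W_xy`.
    have hw_side : G.distDiff x y w = 1 := by
      have := hbip.dist_eq_dist_add_one_of_adj hconn y huw
      rw [dist_comm (u := y), dist_comm (u := y)] at this
      have := hbip.distDiff_eq_one_or_eq_neg_one hconn hxy w
      simp only [distDiff] at hu this ⊢
      omega
    have hadj : (G.deleteEdges (G.crossingEdges (G.distDiff x y))).Adj u w :=
      (deleteEdges_crossingEdges_adj _).mpr ⟨huw, hu.trans hw_side.symm⟩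
    exact hadj.reachable.trans (ih _ (by omega) hw_side rfl)

lemma Colorable.reachable_deleteEdges_crossingEdges_distDiff_iff (hbip : G.Colorable 2)
    (hconn : G.Connected) {x y : V} (hxy : G.Adj x y) (u v : V) :
    (G.deleteEdges (G.crossingEdges (G.distDiff x y))).Reachable u v ↔
      G.distDiff x y u = G.distDiff x y v := by
  refine ⟨Reachable.eq_of_deleteEdges_crossingEdges, fun huv ↦ ?_⟩
  rcases hbip.distDiff_eq_one_or_eq_neg_one hconn hxy u with hu | hu
  · exact (hbip.reachable_deleteEdges_of_distDiff_eq_one hconn hxy hu).trans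
      (hbip.reachable_deleteEdges_of_distDiff_eq_one hconn hxy (huv ▸ hu)).symm
  · have hu' : G.distDiff y x u = 1 := by rw [distDiff_swap, hu, neg_neg]
    have hv' : G.distDiff y x v = 1 := by rw [distDiff_swap, ← huv, hu, neg_neg]
    rw [← crossingEdges_distDiff_swap]
    exact (hbip.reachable_deleteEdges_of_distDiff_eq_one hconn hxy.symm hu').trans
      (hbip.reachable_deleteEdges_of_distDiff_eq_one hconn hxy.symm hv').symm

end SimpleGraph

/-- In a connected bipartite graph G with an edge xy, deleting the
Θ-class F_xy of the edge xy leaves exactly two connected components, namely the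
subgraphs induced by W_xy and W_yx: two vertices are reachable in G − F_xy iff
they both lie in W_xy or both lie in W_yx. -/
theorem stmt1 {V : Type*} (G : SimpleGraph V) (hconn : G.Connected)
    (hbip : G.Colorable 2) (x y : V) (hxy : G.Adj x y)
    (F : Set (Sym2 V))
    (hF : F = {e | ∃ a b : V, e = s(a, b) ∧ G.Adj a b ∧
      G.dist a x + G.dist b y ≠ G.dist a y + G.dist b x}) :
    ∀ u v : V, (G.deleteEdges F).Reachable u v ↔
      ((G.dist u x < G.dist u y ∧ G.dist v x < G.dist v y) ∨
       (G.dist u y < G.dist u x ∧ G.dist v y < G.dist v x)) := by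
  have hF_theta : F = G.crossingEdges (G.distDiff x y) := by
    simp only [hF, SimpleGraph.crossingEdges, SimpleGraph.dist_add_dist_ne_iff_distDiff_ne]
  intro u v
  have hu := hbip.distDiff_eq_one_or_eq_neg_one hconn hxy u
  have hv := hbip.distDiff_eq_one_or_eq_neg_one hconn hxy v
  rw [hF_theta, hbip.reachable_deleteEdges_crossingEdges_distDiff_iff hconn hxy]
  simp only [SimpleGraph.distDiff] at hu hv ⊢
  omega
end

section
/- Let X ⊆ {0,1}^n and let Q_n(X) be the daisy cube, i.e., the subgraph of Q_n induced by the downward closure {u ∈ {0,1}^n : u ≤ x for some x ∈ X} under the coordinatewise partial order. Then Q_n(X) is an isometric subgraph of Q_n: for any two vertices u, v of Q_n(X), the distance between u and v within Q_n(X) equals their Hamming distance. -/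
/-- The hypercube Q_n: vertices are binary strings of length n,
two vertices are adjacent iff they differ in exactly one position. -/
def Qcube (n : ℕ) : SimpleGraph (Fin n → Bool) where
  Adj u v := hammingDist u v = 1
  symm := by
    constructor
    intro u v h
    replace h : hammingDist u v = 1 := h
    show hammingDist v u = 1
    rwa [hammingDist_comm]
  loopless := by
    constructor
    intro u h
    simp [hammingDist_self] at h

/-!
Hamming distance never exceeds the length of a walk in Q_n, so only the upper bound needs the
daisy structure. For two vertices u ≠ v of a down-set D, flip a coordinate i where they differ:
if some i has v i < u i, flipping it moves below u; otherwise u ≤ v and flipping any differing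
coordinate stays below v. Either way the new vertex lies in D and is one step closer to v.
-/

open Function SimpleGraph

section Update

variable {ι β : Type*} [Fintype ι] [DecidableEq ι] [DecidableEq β]

theorem hammingDist_update_self {u : ι → β} {i : ι} {b : β} (h : u i ≠ b) :
    hammingDist u (update u i b) = 1 := by
  rw [hammingDist, Finset.card_eq_one]
  refine ⟨i, Finset.ext fun j => ?_⟩
  by_cases hji : j = i
  · subst hji; simpa using h
  · simp [hji]

theorem hammingDist_update_add_one {u v : ι → β} {i : ι} (h : u i ≠ v i) :
    hammingDist (update u i (v i)) v + 1 = hammingDist u v := by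
  have hdiff : ({j | update u i (v i) j ≠ v j} : Finset ι) = ({j | u j ≠ v j} : Finset ι).erase i := by
    ext j
    by_cases hji : j = i
    · subst hji; simp
    · simp [hji]
  rw [hammingDist, hammingDist, hdiff, Finset.card_erase_add_one (by simpa using h)]

end Update

theorem IsLowerSet.exists_update_mem {ι β : Type*} [DecidableEq ι] [LinearOrder β]
    {D : Set (ι → β)} (hD : IsLowerSet D) {u v : ι → β} (hu : u ∈ D) (hv : v ∈ D)
    (huv : u ≠ v) : ∃ i, u i ≠ v i ∧ update u i (v i) ∈ D := by
  by_cases hdown : ∃ i, v i < u i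
  · obtain ⟨i, hi⟩ := hdown
    exact ⟨i, hi.ne', hD (update_le_self_iff.2 hi.le) hu⟩
  · have hle : u ≤ v := fun i => not_lt.1 fun hi => hdown ⟨i, hi⟩
    obtain ⟨i, hi⟩ := Function.ne_iff.1 huv
    exact ⟨i, hi, hD (update_le_iff.2 ⟨le_rfl, fun j _ => hle j⟩) hv⟩

theorem Qcube.adj_update {n : ℕ} {u : Fin n → Bool} {i : Fin n} {b : Bool} (h : u i ≠ b) :
    (Qcube n).Adj u (update u i b) :=
  hammingDist_update_self h

theorem Qcube.hammingDist_le_length {n : ℕ} {u v : Fin n → Bool} (p : (Qcube n).Walk u v) :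
    hammingDist u v ≤ p.length := by
  induction p with
  | nil => simp
  | @cons a b c hab q ih =>
    calc hammingDist a c ≤ hammingDist a b + hammingDist b c := hammingDist_triangle a b c
      _ ≤ (Walk.cons hab q).length := by
        rw [Walk.length_cons, show hammingDist a b = 1 from hab]; omega

theorem IsLowerSet.exists_walk_induce_Qcube_length_eq_hammingDist {n : ℕ}
    {D : Set (Fin n → Bool)} (hD : IsLowerSet D) (u v : D) :
    ∃ p : ((Qcube n).induce D).Walk u v, p.length = hammingDist (u : Fin n → Bool) v := by
  induction hk : hammingDist (u : Fin n → Bool) v generalizing u with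
  | zero =>
    obtain rfl : u = v := Subtype.ext (hammingDist_eq_zero.1 hk)
    exact ⟨Walk.nil, rfl⟩
  | succ k ih =>
    have huv : (u : Fin n → Bool) ≠ v := hammingDist_ne_zero.1 (by omega)
    obtain ⟨i, hi, hw⟩ := hD.exists_update_mem u.2 v.2 huv
    have hdist := hammingDist_update_add_one hi
    obtain ⟨p, hp⟩ := ih ⟨_, hw⟩ (by simp only; omega)
    have hadj : ((Qcube n).induce D).Adj u ⟨_, hw⟩ := Qcube.adj_update hi
    exact ⟨Walk.cons hadj p, by rw [Walk.length_cons, hp]⟩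

theorem IsLowerSet.dist_induce_Qcube {n : ℕ} {D : Set (Fin n → Bool)} (hD : IsLowerSet D)
    (u v : D) : ((Qcube n).induce D).dist u v = hammingDist (u : Fin n → Bool) v := by
  obtain ⟨p, hp⟩ := hD.exists_walk_induce_Qcube_length_eq_hammingDist u v
  obtain ⟨q, hq⟩ := Reachable.exists_walk_length_eq_dist ⟨p⟩
  refine le_antisymm (hp ▸ dist_le p) ?_
  rw [← hq, ← Walk.length_map (Embedding.induce D).toHom q]
  exact Qcube.hammingDist_le_length _

/-- The daisy cube Q_n(X), i.e. the subgraph of Q_n induced on the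
downward closure D of X (coordinatewise order), is isometric in Q_n: the
distance between two of its vertices equals their Hamming distance. -/
theorem stmt4 (n : ℕ) (X : Set (Fin n → Bool))
    (D : Set (Fin n → Bool)) (hD : D = {u | ∃ x ∈ X, u ≤ x}) :
    ∀ u v : D, ((Qcube n).induce D).dist u v =
      hammingDist (u : Fin n → Bool) (v : Fin n → Bool) := by
  subst hD
  exact (lowerClosure X).lower.dist_induce_Qcube
end

section
/- Let G be a finite simple graph and P an odd-length handle of G (a path whose internal vertices have degree 2 in G) with at least 3 edges. Then P is M-alternating for every perfect matching M of G: along P, edges belong to M and do not belong to M alternately. -/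
namespace SimpleGraph

variable {V : Type*} {G : SimpleGraph V}

theorem neighborFinset_eq_pair_of_degree_eq_two [DecidableEq V] {x a b : V}
    [Fintype (G.neighborSet x)] (hdeg : G.degree x = 2) (ha : G.Adj x a) (hb : G.Adj x b)
    (hab : a ≠ b) :
    G.neighborFinset x = {a, b} := by
  refine (Finset.eq_of_subset_of_card_le (fun y hy => ?_) ?_).symm
  · rcases Finset.mem_insert.1 hy with rfl | hy
    · exact (mem_neighborFinset _ _ _).2 ha
    · exact (mem_neighborFinset _ _ _).2 (Finset.mem_singleton.1 hy ▸ hb)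
  · rw [card_neighborFinset_eq_degree, hdeg, Finset.card_pair hab]

theorem Subgraph.IsMatching.adj_iff_not_adj_of_degree_eq_two {M : G.Subgraph}
    (hM : M.IsMatching) {x a b : V} [Fintype (G.neighborSet x)] (hx : x ∈ M.verts)
    (hdeg : G.degree x = 2) (ha : G.Adj x a) (hb : G.Adj x b) (hab : a ≠ b) :
    M.Adj x a ↔ ¬ M.Adj x b := by
  classical
  obtain ⟨w, hw, hw_unique⟩ := hM hx
  have hw_nbr : w ∈ G.neighborFinset x := (mem_neighborFinset _ _ _).2 (M.adj_sub hw)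
  rw [neighborFinset_eq_pair_of_degree_eq_two hdeg ha hb hab, Finset.mem_insert,
    Finset.mem_singleton] at hw_nbr
  constructor
  · intro hxa hxb
    exact hab ((hw_unique a hxa).trans (hw_unique b hxb).symm)
  · intro hxb
    rcases hw_nbr with rfl | rfl
    · exact hw
    · exact absurd hw hxb

end SimpleGraph

theorem stmt10_general {V : Type*} [Fintype V] (G : SimpleGraph V) [DecidableRel G.Adj]
    (k : ℕ) (v : ℕ → V)
    (hinj : ∀ i j, i ≤ 2 * k + 1 → j ≤ 2 * k + 1 → v i = v j → i = j)
    (hadj : ∀ i, i < 2 * k + 1 → G.Adj (v i) (v (i + 1)))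
    (hdeg : ∀ i, 0 < i → i < 2 * k + 1 → G.degree (v i) = 2)
    (M : G.Subgraph) (hM : M.IsPerfectMatching) :
    ∀ i, i + 1 < 2 * k + 1 →
      (s(v i, v (i + 1)) ∈ M.edgeSet ↔ s(v (i + 1), v (i + 2)) ∉ M.edgeSet) := by
  intro i hi
  have hne : v i ≠ v (i + 2) := fun h => by
    have := hinj i (i + 2) (by omega) hi h
    omega
  simp only [SimpleGraph.Subgraph.mem_edgeSet]
  rw [M.adj_comm]
  exact hM.1.adj_iff_not_adj_of_degree_eq_two (hM.2 _) (hdeg (i + 1) (by omega) hi)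
    (hadj i (by omega)).symm (hadj (i + 1) hi) hne

/-- An odd-length handle P = v₀v₁…v_{2k+1} (k ≥ 1, so at least 3
edges; internal vertices have degree 2 in G) is M-alternating for every perfect
matching M of G: consecutive edges of P alternate between lying in M and not. -/
theorem stmt10 {V : Type*} [Fintype V] (G : SimpleGraph V) [DecidableRel G.Adj]
    (k : ℕ) (hk : 1 ≤ k) (v : ℕ → V)
    (hinj : ∀ i j, i ≤ 2 * k + 1 → j ≤ 2 * k + 1 → v i = v j → i = j)
    (hadj : ∀ i, i < 2 * k + 1 → G.Adj (v i) (v (i + 1)))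
    (hdeg : ∀ i, 0 < i → i < 2 * k + 1 → G.degree (v i) = 2)
    (M : G.Subgraph) (hM : M.IsPerfectMatching) :
    ∀ i, i + 1 < 2 * k + 1 →
      (s(v i, v (i + 1)) ∈ M.edgeSet ↔ s(v (i + 1), v (i + 2)) ∉ M.edgeSet) :=
  stmt10_general G k v hinj hadj hdeg M hM
end
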